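/- Let G be a 3-edge-connected graph, w ≥ 2 an integer, and S ⊆ V(G) with |S| ≥ w + 1 and |δ_G(S, V(G)∖S)| ≤ 2w. If tcw(G) ≤ w, then there exists a non-trivial tree-cut decomposition (T, X) of G[S] such that: (1) T is a star with central node t_c and ℓ ≥ 1 leaves; (2) the internal width of (T, X) is at most w (all adhesions have size at most w, and the 3-center torso size at every non-leaf node is at most w); (3) |X_{t_c}| + ℓ ≤ w; and (4) for every leaf node t, Σ_{x ∈ ∂_G(S) ∩ X_t} |δ_G({x}, V(G)∖S)| ≤ w. -/

import Mathlib

open scoped Classical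

noncomputable section

/-- A multigraph on vertex type `V`: a set of vertices together with a multiset of
(undirected, loopless) edges, parallel edges being allowed. -/
structure MGraph (V : Type) where
  verts : Set V
  edges : Multiset (Sym2 V)

namespace MGraph

variable {V : Type}

/-- The degree of a vertex: the number of incident edges, with multiplicity. -/
def degree (G : MGraph V) (x : V) : ℕ :=
  (G.edges.filter (fun e => x ∈ e)).card

/-- The set of neighbours of a vertex. -/
def nbrSet (G : MGraph V) (x : V) : Set V :=
  {y | y ≠ x ∧ s(x, y) ∈ G.edges}

/-- `δ_G(A,B)`: the multiset of edges of `G` with one endpoint in `A` and the other in `B`. -/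
def cut (G : MGraph V) (A B : Set V) : Multiset (Sym2 V) :=
  G.edges.filter (fun e => ∃ a ∈ A, ∃ b ∈ B, e = s(a, b))

/-- Adjacency in a multigraph. -/
def Adj (G : MGraph V) (x y : V) : Prop := x ≠ y ∧ s(x, y) ∈ G.edges

/-- Connectivity of a multigraph. -/
def Connected (G : MGraph V) : Prop :=
  G.verts.Nonempty ∧ ∀ x ∈ G.verts, ∀ y ∈ G.verts, Relation.ReflTransGen G.Adj x y

/-- Deleting a (multi)set of edges from a multigraph. -/
def deleteEdges (G : MGraph V) (F : Multiset (Sym2 V)) : MGraph V :=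
  ⟨G.verts, G.edges - F⟩

/-- A multigraph is 3-edge-connected if it is connected and remains connected after
removal of any set of at most 2 edges. -/
def ThreeEdgeConnected (G : MGraph V) : Prop :=
  G.Connected ∧ ∀ F : Multiset (Sym2 V), F ≤ G.edges → Multiset.card F ≤ 2 →
    (G.deleteEdges F).Connected

/-- The induced sub-multigraph on a set of vertices. -/
def induce (G : MGraph V) (S : Set V) : MGraph V :=
  ⟨G.verts ∩ S, G.edges.filter (fun e => ∀ v ∈ e, v ∈ S)⟩

/-- `∂_G(S)`: the vertices of `S` having a neighbour outside of `S`. -/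
def boundary (G : MGraph V) (S : Set V) : Set V :=
  {x | x ∈ S ∧ ∃ u, u ∈ G.verts ∧ u ∉ S ∧ s(x, u) ∈ G.edges}

/-- `|δ_G({x}, V(G)∖S)|`: the number of edges from `x` to the outside of `S`. -/
def bWeight (G : MGraph V) (S : Set V) (x : V) : ℕ :=
  (G.edges.filter (fun e => ∃ u, u ∈ G.verts ∧ u ∉ S ∧ e = s(x, u))).card

/-- Dissolving step used in the definition of the 3-center of `(G, X)`: a vertex `x ∉ X`
of degree 2 with exactly two (distinct) neighbours `y, z` is removed and the edge `yz`
is added (increasing its multiplicity if it is already present). -/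
def DissolveStep (X : Set V) (G G' : MGraph V) : Prop :=
  ∃ x y z, x ∉ X ∧ x ∈ G.verts ∧ y ≠ z ∧ x ≠ y ∧ x ≠ z ∧
    G.edges.filter (fun e => x ∈ e) = {s(x, y), s(x, z)} ∧
    G' = ⟨G.verts \ {x}, G.edges.filter (fun e => x ∉ e) + {s(y, z)}⟩

/-- Deletion step used in the definition of the 3-center of `(G, X)`: a vertex `x ∉ X`
of degree at most 2 with at most one neighbour is removed. -/
def DeleteStep (X : Set V) (G G' : MGraph V) : Prop :=
  ∃ x, x ∉ X ∧ x ∈ G.verts ∧ G.degree x ≤ 2 ∧ (G.nbrSet x).Subsingleton ∧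
    G' = ⟨G.verts \ {x}, G.edges.filter (fun e => x ∉ e)⟩

def CenterStep (X : Set V) (G G' : MGraph V) : Prop :=
  DissolveStep X G G' ∨ DeleteStep X G G'

/-- `H` is a 3-center of `(G, X)` if it is obtained from `G` by repeatedly applying
dissolve/delete steps until none applies. -/
def IsThreeCenter (X : Set V) (G H : MGraph V) : Prop :=
  Relation.ReflTransGen (CenterStep X) G H ∧ ∀ H', ¬ CenterStep X H H'

/-- `(T, X)` is a tree-cut decomposition of `G`: `T` is a tree and the bags `X t` are
pairwise disjoint with union `V(G)`. -/
def IsTCD {ι : Type} (G : MGraph V) (T : SimpleGraph ι) (X : ι → Set V) : Prop :=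
  T.IsTree ∧ (Pairwise fun t t' => Disjoint (X t) (X t')) ∧ (⋃ t, X t) = G.verts

/-- Given a tree edge `{a,b}` of `T`, the union of the bags over the component of
`T - {a,b}` containing `a`. -/
def edgeSide {ι : Type} (T : SimpleGraph ι) (X : ι → Set V) (a b : ι) : Set V :=
  ⋃ t ∈ {t | (T.deleteEdges {s(a, b)}).Reachable a t}, X t

/-- The adhesion `δ^T({a,b})` of a tree edge of a tree-cut decomposition. -/
def adhesion (G : MGraph V) {ι : Type} (T : SimpleGraph ι) (X : ι → Set V) (a b : ι) :
    Multiset (Sym2 V) :=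
  G.cut (edgeSide T X a b) (edgeSide T X b a)

/-- `a` and `b` are connected in `T - t`. -/
def ReachAvoid {ι : Type} (T : SimpleGraph ι) (t a b : ι) : Prop :=
  ∃ (ha : a ∈ ({t}ᶜ : Set ι)) (hb : b ∈ ({t}ᶜ : Set ι)),
    (T.induce ({t}ᶜ : Set ι)).Reachable ⟨a, ha⟩ ⟨b, hb⟩

/-- The neighbour of `t` indexing the component of `T - t` whose bags contain `v`. -/
def compOf {ι : Type} (T : SimpleGraph ι) (X : ι → Set V) (t : ι) (v : V) : ι :=
  if h : ∃ s, T.Adj t s ∧ ∃ t', v ∈ X t' ∧ ReachAvoid T t s t' then h.choose else t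

/-- The identification map used in the definition of the torso at `t`. -/
def torsoMap {ι : Type} (T : SimpleGraph ι) (X : ι → Set V) (t : ι) (v : V) : V ⊕ ι :=
  if v ∈ X t then Sum.inl v else Sum.inr (compOf T X t v)

/-- The torso of `G` at node `t` of the tree-cut decomposition `(T, X)`: each non-empty
union of bags over a component of `T - t` is identified to a single vertex (components
are indexed by the corresponding neighbour of `t`); parallel edges are kept, loops
are discarded. -/
def torso {ι : Type} (G : MGraph V) (T : SimpleGraph ι) (X : ι → Set V) (t : ι) :
    MGraph (V ⊕ ι) :=
  ⟨Sum.inl '' (X t) ∪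
     Sum.inr '' {s | T.Adj t s ∧ ∃ t' v, v ∈ X t' ∧ ReachAvoid T t s t'},
   (G.edges.map (Sym2.map (torsoMap T X t))).filter (fun e => ¬ e.IsDiag)⟩

/-- The width of the tree-cut decomposition `(T, X)` of `G` is at most `w`: all
adhesions have at most `w` edges and all 3-centers of torsos have at most `w` vertices. -/
def WidthLE {ι : Type} (G : MGraph V) (T : SimpleGraph ι) (X : ι → Set V) (w : ℕ) : Prop :=
  (∀ a b, T.Adj a b → Multiset.card (adhesion G T X a b) ≤ w) ∧
  ∀ t H, IsThreeCenter (Sum.inl '' (X t)) (torso G T X t) H → H.verts.ncard ≤ w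

/-- `G` has a tree-cut decomposition of width at most `w`. -/
def tcwLE (G : MGraph V) (w : ℕ) : Prop :=
  ∃ (ι : Type) (_ : Finite ι) (T : SimpleGraph ι) (X : ι → Set V),
    IsTCD G T X ∧ WidthLE G T X w

/-- The tree-cut width of a multigraph. -/
def tcw (G : MGraph V) : ℕ := sInf {w | tcwLE G w}

/-- A leaf of a tree: a node with exactly one neighbour. -/
def IsLeaf {ι : Type} (T : SimpleGraph ι) (t : ι) : Prop := ∃! s, T.Adj t s

/-- The internal width of `(T, X)` is at most `w`: all adhesions are at most `w` and the
3-center torso sizes of all *non-leaf* nodes are at most `w`. -/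
def InWidthLE {ι : Type} (G : MGraph V) (T : SimpleGraph ι) (X : ι → Set V) (w : ℕ) : Prop :=
  (∀ a b, T.Adj a b → Multiset.card (adhesion G T X a b) ≤ w) ∧
  ∀ t, ¬ IsLeaf T t →
    ∀ H, IsThreeCenter (Sum.inl '' (X t)) (torso G T X t) H → H.verts.ncard ≤ w

/-- A tree-cut decomposition is non-trivial if at least two bags are non-empty. -/
def NonTrivial {ι : Type} (X : ι → Set V) : Prop :=
  ∃ t t', t ≠ t' ∧ (X t).Nonempty ∧ (X t').Nonempty

/-- Identifying the vertex set `S` of `G` into the single vertex `v₀ ∈ S`: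
edges inside `S` are deleted (loops discarded), parallel edges are kept. -/
def collapse (G : MGraph V) (S : Set V) (v₀ : V) : MGraph V :=
  ⟨(G.verts \ S) ∪ {v₀},
   (G.edges.map (Sym2.map (fun x => if x ∈ S then v₀ else x))).filter (fun e => ¬ e.IsDiag)⟩

/-- One step of taking an immersion: deleting an edge, deleting a vertex, or lifting a
pair of edges `{x,v}, {v,y}` to the single edge `{x,y}`. -/
def ImmStep (G G' : MGraph V) : Prop :=
  (∃ e ∈ G.edges, G' = ⟨G.verts, G.edges.erase e⟩) ∨
  (∃ v ∈ G.verts, G' = ⟨G.verts \ {v}, G.edges.filter (fun e => v ∉ e)⟩) ∨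
  (∃ x v y, x ≠ v ∧ y ≠ v ∧ x ≠ y ∧ s(x, v) ∈ G.edges ∧ s(v, y) ∈ G.edges.erase s(x, v) ∧
    G' = ⟨G.verts, s(x, y) ::ₘ ((G.edges.erase s(x, v)).erase s(v, y))⟩)

/-- `H` is an immersion of `G`. -/
def IsImmersion (H G : MGraph V) : Prop := Relation.ReflTransGen ImmStep G H

end MGraph

/-- The multigraph associated to a simple graph. -/
def SimpleGraph.toMGraph {α : Type} [Fintype α] (G : SimpleGraph α) : MGraph α :=
  ⟨Set.univ, (Set.toFinite G.edgeSet).toFinset.val⟩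

/-- The star with `ℓ` leaves: center `none`, leaves `some i`. -/
def starGraph (ℓ : ℕ) : SimpleGraph (Option (Fin ℓ)) :=
  SimpleGraph.fromRel (fun a _ => a = none)

/-- The graph `H_w`: `w` disjoint cliques `Q_i = {(i,j) : j}` of size `w`, together with
the cross edges `{(i,j),(j,i)}` for `i ≠ j`. -/
def Hw (w : ℕ) : SimpleGraph (Fin w × Fin w) :=
  SimpleGraph.fromRel (fun p q => p.1 = q.1 ∨ (q.1 = p.2 ∧ q.2 = p.1))

/-- Two vertex sets touch in `G`: they intersect or are joined by an edge. -/
def Touch {α : Type} (G : SimpleGraph α) (A B : Set α) : Prop :=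
  (A ∩ B).Nonempty ∨ ∃ a ∈ A, ∃ b ∈ B, G.Adj a b

/-- A bramble: a collection of (vertex sets of) connected subgraphs pairwise touching. -/
def IsBramble {α : Type} (G : SimpleGraph α) (ℬ : Set (Set α)) : Prop :=
  (∀ A ∈ ℬ, (G.induce A).Connected) ∧ ∀ A ∈ ℬ, ∀ B ∈ ℬ, Touch G A B

/-- `B(i,Z) = {(i,j) : j ∈ Z} ∪ {(j,i) : j ∈ Z}`. -/
def Bset (w : ℕ) (i : Fin w) (Z : Finset (Fin w)) : Set (Fin w × Fin w) :=
  {p | (p.1 = i ∧ p.2 ∈ Z) ∨ (p.2 = i ∧ p.1 ∈ Z)}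

/-- The bramble `B_w = {H_w[B(i,Z)] : i ∈ [w], Z ⊆ [w]∖{i}, |Z| = w/2}`. -/
def Bfam (w : ℕ) : Set (Set (Fin w × Fin w)) :=
  {A | ∃ (i : Fin w) (Z : Finset (Fin w)), i ∉ Z ∧ Z.card = w / 2 ∧ A = Bset w i Z}

/-- `(T, Y)` is a tree decomposition of the simple graph `G`. -/
def IsTreeDecomp {α ι : Type} (G : SimpleGraph α) (T : SimpleGraph ι) (Y : ι → Set α) : Prop :=
  T.IsTree ∧ (∀ v, ∃ x, v ∈ Y x) ∧
  (∀ u v, G.Adj u v → ∃ x, u ∈ Y x ∧ v ∈ Y x) ∧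
  (∀ v, (T.induce {x | v ∈ Y x}).Connected)

/-- `G` has treewidth at most `k`. -/
def twLE {α : Type} (G : SimpleGraph α) (k : ℕ) : Prop :=
  ∃ (ι : Type) (_ : Finite ι) (T : SimpleGraph ι) (Y : ι → Set α),
    IsTreeDecomp G T Y ∧ ∀ x, (Y x).ncard ≤ k + 1

end
noncomputable section
open scoped Classical

namespace MGraph

variable {V : Type}

/-- The weight function `γ'` of Lemma 4: `γ'(v) = |δ_G({v}, V(G)∖S)|` for `v ∈ S`,
and `0` otherwise. -/
def gammaExt (G : MGraph V) (S : Set V) (v : V) : ℕ :=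
  if v ∈ S then G.bWeight S v else 0

/-- `γ'(T_b)` where `T_b` is the component of `T - {a,b}` containing `b`. -/
def sideWeight (G : MGraph V) {ι : Type} (T : SimpleGraph ι) (X : ι → Set V)
    (S : Set V) (a b : ι) : ℕ :=
  ∑ᶠ t ∈ {t | (T.deleteEdges {s(a, b)}).Reachable b t}, ∑ᶠ v ∈ X t, G.gammaExt S v

/-- The edge `{x,y}` of `T` is oriented from `x` to `y` by Rule 1 (`γ'(T_y) > w`) or by
Rule 2 (`S` avoids all the bags on the `x`-side). -/
def ruleOrient (G : MGraph V) {ι : Type} (T : SimpleGraph ι) (X : ι → Set V)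
    (S : Set V) (w : ℕ) (x y : ι) : Prop :=
  w < G.sideWeight T X S x y ∨ S ∩ edgeSide T X x y = ∅

end MGraph

/-- The tree obtained from `T` by attaching `ℓ` new leaves to the node `t`
(`t` plays the role of the center of the star replacing the former leaf `t`). -/
def refineTree {ι : Type} (T : SimpleGraph ι) (t : ι) (ℓ : ℕ) : SimpleGraph (ι ⊕ Fin ℓ) :=
  SimpleGraph.fromRel (fun a b =>
    (∃ i j, a = Sum.inl i ∧ b = Sum.inl j ∧ T.Adj i j) ∨
    (a = Sum.inl t ∧ ∃ i, b = Sum.inr i))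

/-- The bags of the refined decomposition: the bag of the former leaf `t` is replaced by
the central bag `Xs none` of the star decomposition, the new leaves get the leaf bags. -/
def refineBags {V ι : Type} (X : ι → Set V) (t : ι) {ℓ : ℕ}
    (Xs : Option (Fin ℓ) → Set V) : ι ⊕ Fin ℓ → Set V :=
  fun s => Sum.rec (fun a => if a = t then Xs none else X a) (fun i => Xs (some i)) s

/-- `w = n³/2 + k`, the target width in the Min Bisection reduction. -/
def bisectW (n k : ℕ) : ℕ := n ^ 3 / 2 + k

/-- The vertex type of the graph `G'` of the Min Bisection reduction:
`V = Fin n`, `Q = Fin (w-2)`, and a set `C_{x,y}` of `w+1` vertices for each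
(unordered) pair `x < y` of vertices of `Q`. -/
abbrev BisV (n w : ℕ) : Type :=
  Fin n ⊕ (Fin (w - 2) ⊕ (({p : Fin (w - 2) × Fin (w - 2) // p.1 < p.2}) × Fin (w + 1)))

/-- The (one-directional) edge relation of `G'`: `V` induces a copy of `G`; each vertex
`a ∈ V` is adjacent to the `n²` vertices `f a ⊆ Q`; every vertex of `C_{x,y}` is
adjacent to both `x` and `y`. -/
def bisectR {n : ℕ} (G : SimpleGraph (Fin n)) (w : ℕ) (f : Fin n → Finset (Fin (w - 2))) :
    BisV n w → BisV n w → Prop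
  | Sum.inl a, Sum.inl b => G.Adj a b
  | Sum.inl a, Sum.inr (Sum.inl q) => q ∈ f a
  | Sum.inr (Sum.inl q), Sum.inr (Sum.inr c) => q = c.1.1.1 ∨ q = c.1.1.2
  | _, _ => False

/-- The graph `G'` of the Min Bisection reduction. -/
def bisectG {n : ℕ} (G : SimpleGraph (Fin n)) (w : ℕ) (f : Fin n → Finset (Fin (w - 2))) :
    SimpleGraph (BisV n w) :=
  SimpleGraph.fromRel (bisectR G w f)

/-- The multiset of edges used by a walk, given as its list of vertices. -/
def walkEdges {V : Type} (l : List V) : Multiset (Sym2 V) :=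
  ↑((l.zip l.tail).map fun p => s(p.1, p.2))

end

noncomputable section
open scoped Classical
open MGraph

/-! Take a tree-cut decomposition `(T, X)` of `G` of width at most `w`, and weight each vertex
of `S` by the number of its edges leaving `S`, so that the total weight is at most `2w`. Orient a
tree edge towards its side when that side weighs more than `w`, and away from its side when that
side misses `S`; no edge gets both orientations, so some node `t` has no outgoing edge.
Restricting to `S` and contracting every branch at `t` that meets `S` into a leaf yields the star:
its adhesions are adhesions of `(T, X)`, every leaf weighs at most `w`, and, as 3-edge-connectivity
makes the torso at `t` its own 3-center, the central bag plus the number of leaves is at most `w`.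
Since `|S| > w`, there is at least one leaf. -/

namespace SimpleGraph

variable {ι : Type} {T : SimpleGraph ι} {a b c t : ι}

def side (T : SimpleGraph ι) (a b : ι) : Set ι :=
  {t | (T.deleteEdges {s(a, b)}).Reachable a t}

lemma mem_side_iff : t ∈ T.side a b ↔ ∃ p : T.Walk a t, s(a, b) ∉ p.edges :=
  reachable_deleteEdges_iff_exists_walk

lemma mem_side_self (a b : ι) : a ∈ T.side a b := Reachable.refl a

lemma Preconnected.side_union (hT : T.Preconnected) (a b : ι) :
    T.side a b ∪ T.side b a = Set.univ := by
  refine Set.eq_univ_of_forall fun t => ?_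
  obtain ⟨p, hp⟩ := hT.exists_isPath a t
  cases p with
  | nil => exact Or.inl (mem_side_self a b)
  | @cons _ x _ hax p =>
    rw [Walk.cons_isPath_iff] at hp
    have ha : s(a, b) ∉ p.edges := fun h => hp.2 (p.fst_mem_support_of_mem_edges h)
    by_cases hxb : x = b
    · subst hxb
      exact Or.inr (mem_side_iff.mpr ⟨p, by rwa [Sym2.eq_swap]⟩)
    · refine Or.inl (mem_side_iff.mpr ⟨.cons hax p, ?_⟩)
      simp [Walk.edges_cons, Ne.symm hxb, hax.ne, ha]

namespace IsAcyclic

variable (hT : T.IsAcyclic)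
include hT

lemma notMem_side (hab : T.Adj a b) : b ∉ T.side a b :=
  isBridge_iff.mp (isAcyclic_iff_forall_adj_isBridge.mp hT hab)

lemma notMem_support {p : T.Walk a t} (hab : T.Adj a b) (hp : s(a, b) ∉ p.edges) :
    b ∉ p.support := fun hb =>
  hT.notMem_side hab <| mem_side_iff.mpr
    ⟨p.takeUntil b hb, fun h => hp (p.edges_takeUntil_subset_edges hb h)⟩

lemma disjoint_side (hab : T.Adj a b) : Disjoint (T.side a b) (T.side b a) := by
  refine Set.disjoint_left.mpr fun t hat hbt => hT.notMem_side hab (hat.trans ?_)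
  rw [side, Set.mem_ofPred, Sym2.eq_swap] at hbt
  exact hbt.symm

lemma side_subset_side (hbc : T.Adj b c) (hca : c ≠ a) :
    T.side c b ⊆ T.side b a := by
  intro t ht
  obtain ⟨p, hp⟩ := mem_side_iff.mp ht
  have hb := hT.notMem_support hbc.symm hp
  refine mem_side_iff.mpr ⟨.cons hbc p, ?_⟩
  simp only [Walk.edges_cons, List.mem_cons, Sym2.eq, Sym2.rel_iff', not_or]
  exact ⟨by simp [Ne.symm hca, hbc.ne], fun h => hb (p.fst_mem_support_of_mem_edges h)⟩

lemma eq_of_mem_side (hab : T.Adj t a) (hcb : T.Adj t b) (ha : c ∈ T.side a t)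
    (hb : c ∈ T.side b t) : a = b := by
  by_contra hne
  exact Set.disjoint_left.mp (hT.disjoint_side hab.symm) ha
    (hT.side_subset_side hcb (Ne.symm hne) hb)

lemma reachAvoid_iff_mem_side {s : ι} (hts : T.Adj t s) (c : ι) :
    ReachAvoid T t s c ↔ c ∈ T.side s t := by
  constructor
  · rintro ⟨hs, hc, ⟨q⟩⟩
    refine mem_side_iff.mpr ⟨q.map (Embedding.induce _).toHom, fun h => ?_⟩
    obtain ⟨x, hx, hxt⟩ := List.mem_map.mp
      ((Walk.support_map _ q) ▸ (q.map _).snd_mem_support_of_mem_edges h)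
    exact x.2 hxt
  · intro h
    obtain ⟨p, hp⟩ := mem_side_iff.mp h
    have ht := hT.notMem_support hts.symm hp
    exact ⟨_, _, ⟨p.induce {t}ᶜ fun x hx hxt => ht (hxt ▸ hx)⟩⟩

/-- An arc minimising the side it points into would have a successor pointing into a smaller
side. -/
lemma exists_forall_adj_not [Finite ι] [Nonempty ι] {R : ι → ι → Prop}
    (hR : ∀ x y, T.Adj x y → R x y → ¬ R y x) : ∃ t, ∀ s, T.Adj t s → ¬ R t s := by
  by_contra! hout
  obtain ⟨t, ht⟩ := hout (Classical.arbitrary ι)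
  obtain ⟨⟨x, y⟩, ⟨hxy, hRxy⟩, hmin⟩ := Set.exists_min_image
    {p : ι × ι | T.Adj p.1 p.2 ∧ R p.1 p.2} (fun p => (T.side p.2 p.1).ncard) (Set.toFinite _)
    ⟨(_, t), ht⟩
  obtain ⟨z, hyz, hRyz⟩ := hout y
  have hzx : z ≠ x := fun h => hR x y hxy hRxy (h ▸ hRyz)
  have hlt : (T.side z y).ncard < (T.side y x).ncard :=
    Set.ncard_lt_ncard ((Set.ssubset_iff_of_subset (hT.side_subset_side hyz hzx)).mpr
      ⟨y, mem_side_self y x, hT.notMem_side hyz.symm⟩)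
  exact absurd (hmin (y, z) ⟨hyz, hRyz⟩) (not_le.mpr hlt)

end IsAcyclic

lemma Preconnected.exists_adj_mem_side (hT : T.Preconnected) {t₀ : ι} (ht : t ≠ t₀) :
    ∃ s, T.Adj t₀ s ∧ t ∈ T.side s t₀ := by
  obtain ⟨p, hp⟩ := hT.exists_isPath t₀ t
  cases p with
  | nil => exact absurd rfl ht
  | @cons _ s _ hadj p =>
    rw [Walk.cons_isPath_iff] at hp
    exact ⟨s, hadj, mem_side_iff.mpr ⟨p, fun h => hp.2 (p.snd_mem_support_of_mem_edges h)⟩⟩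

lemma side_eq_singleton (h : ∀ c, T.Adj a c → c = b) : T.side a b = {a} := by
  refine Set.eq_singleton_iff_unique_mem.mpr ⟨mem_side_self a b, fun t ⟨p⟩ => ?_⟩
  cases p with
  | nil => rfl
  | cons hadj _ =>
    rw [deleteEdges_adj] at hadj
    exact (hadj.2 (by rw [h _ hadj.1]; rfl)).elim

end SimpleGraph

lemma Multiset.sum_countP_le_card {α β : Type} (t : Finset α) (M : Multiset β)
    (p : α → β → Prop) [∀ a, DecidablePred (p a)]
    (h : ∀ e ∈ M, ∀ a ∈ t, ∀ b ∈ t, p a e → p b e → a = b) :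
    ∑ a ∈ t, M.countP (p a) ≤ Multiset.card M := by
  induction M using Multiset.induction_on with
  | empty => simp
  | cons e M ih =>
    simp only [Multiset.countP_cons, Finset.sum_add_distrib, Multiset.card_cons]
    refine add_le_add (ih fun e' he' => h e' (Multiset.mem_cons_of_mem he')) ?_
    rw [Finset.sum_boole, Nat.cast_id, Finset.card_le_one]
    intro a ha b hb
    exact h e (Multiset.mem_cons_self e M) a (Finset.mem_filter.mp ha).1 b
      (Finset.mem_filter.mp hb).1 (Finset.mem_filter.mp ha).2 (Finset.mem_filter.mp hb).2

lemma finsum_mem_le_finsum_mem_of_subset {α M : Type} [AddCommMonoid M] [Preorder M]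
    [CanonicallyOrderedAdd M] {f : α → M} {s t : Set α} (h : s ⊆ t) (ht : t.Finite) :
    ∑ᶠ x ∈ s, f x ≤ ∑ᶠ x ∈ t, f x := by
  rw [finsum_mem_eq_finite_toFinset_sum f (ht.subset h), finsum_mem_eq_finite_toFinset_sum f ht]
  exact Finset.sum_le_sum_of_subset (Set.Finite.toFinset_subset_toFinset.mpr h)

lemma starGraph_eq (ℓ : ℕ) : starGraph ℓ = SimpleGraph.starGraph none := rfl

lemma isLeaf_starGraph_some {ℓ : ℕ} (i : Fin ℓ) : IsLeaf (starGraph ℓ) (some i) :=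
  ⟨none, by simp [starGraph_eq], fun _ h =>
    (SimpleGraph.starGraph_adj.mp h).2.resolve_left (Option.some_ne_none i)⟩

lemma ncard_neighborSet_starGraph_none (ℓ : ℕ) : ((starGraph ℓ).neighborSet none).ncard = ℓ := by
  have : (starGraph ℓ).neighborSet none = Set.range some := by
    ext (_ | i) <;> simp [starGraph_eq]
  rw [this, Set.ncard_range_of_injective (Option.some_injective _), Nat.card_eq_fintype_card,
    Fintype.card_fin]

lemma side_starGraph_some {ℓ : ℕ} (i : Fin ℓ) : (starGraph ℓ).side (some i) none = {some i} :=
  SimpleGraph.side_eq_singleton fun _ h =>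
    (SimpleGraph.starGraph_adj.mp h).2.resolve_left (Option.some_ne_none i)

namespace MGraph

variable {V ι : Type} {G : MGraph V} {T : SimpleGraph ι} {X : ι → Set V} {S : Set V}
  {a b t : ι} {v : V}

lemma cut_mono {G' : MGraph V} {A B A' B' : Set V} (hE : G.edges ≤ G'.edges) (hA : A ⊆ A')
    (hB : B ⊆ B') : G.cut A B ≤ G'.cut A' B' :=
  (Multiset.filter_le_filter _ hE).trans <| Multiset.monotone_filter_right _
    fun _ ⟨a, ha, b, hb, he⟩ => ⟨a, hA ha, b, hB hb, he⟩

lemma ThreeEdgeConnected.three_le_card_cut (h3 : G.ThreeEdgeConnected) {U : Set V}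
    (hin : (U ∩ G.verts).Nonempty) (hout : (G.verts \ U).Nonempty) :
    3 ≤ Multiset.card (G.cut U Uᶜ) := by
  by_contra! hlt
  obtain ⟨u, huU, hu⟩ := hin
  obtain ⟨x, hx, hxU⟩ := hout
  have hstay : ∀ y, Relation.ReflTransGen (G.deleteEdges (G.cut U Uᶜ)).Adj u y → y ∈ U := by
    intro y hy
    induction hy with
    | refl => exact huU
    | @tail b c _ hbc hb =>
      by_contra hc
      have hm : s(b, c) ∈ G.edges - G.cut U Uᶜ := hbc.2
      rw [cut, Multiset.sub_filter_eq_filter_not, Multiset.mem_filter] at hm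
      exact hm.2 ⟨b, hb, c, hc, rfl⟩
  exact hxU (hstay x ((h3.2 (G.cut U Uᶜ) (Multiset.filter_le _ _) (by omega)).2 u hu x hx))

lemma verts_subset_of_centerStep {A : Set V} {G' : MGraph V} (h : CenterStep A G G') :
    G'.verts ⊆ G.verts := by
  rcases h with ⟨x, -, -, -, -, -, -, -, -, rfl⟩ | ⟨x, -, -, -, -, rfl⟩ <;> exact Set.sdiff_subset

lemma verts_subset_of_reflTransGen {A : Set V} {G' : MGraph V}
    (h : Relation.ReflTransGen (CenterStep A) G G') : G'.verts ⊆ G.verts := by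
  induction h with
  | refl => exact subset_rfl
  | tail _ hstep ih => exact (verts_subset_of_centerStep hstep).trans ih

lemma isThreeCenter_self {A : Set V} (h : ∀ x ∈ G.verts, x ∉ A → 3 ≤ G.degree x) :
    IsThreeCenter A G G := by
  refine ⟨.refl, fun H hstep => ?_⟩
  rcases hstep with ⟨x, y, z, hxA, hxV, -, -, -, hx, -⟩ | ⟨x, hxA, hxV, hx, -⟩
  · have := h x hxV hxA
    rw [degree, hx] at this
    simp at this
  · have := h x hxV hxA
    omega

lemma torso_verts_subset : (torso G T X t).verts ⊆ Sum.inl '' X t ∪ Sum.inr '' T.neighborSet t :=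
  Set.union_subset_union_right _ (Set.image_mono fun _ hs => hs.1)

lemma ncard_verts_le_of_isThreeCenter [Finite ι] (hXt : (X t).Finite) {H : MGraph (V ⊕ ι)}
    (hH : IsThreeCenter (Sum.inl '' X t) (torso G T X t) H) :
    H.verts.ncard ≤ (X t).ncard + (T.neighborSet t).ncard :=
  calc H.verts.ncard ≤ (Sum.inl '' X t ∪ Sum.inr '' T.neighborSet t).ncard :=
        Set.ncard_le_ncard ((verts_subset_of_reflTransGen hH.1).trans torso_verts_subset)
          ((hXt.image _).union (Set.toFinite _))
    _ ≤ (Sum.inl '' X t).ncard + (Sum.inr '' T.neighborSet t).ncard := Set.ncard_union_le _ _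
    _ = (X t).ncard + (T.neighborSet t).ncard := by
        rw [Set.ncard_image_of_injective _ Sum.inl_injective,
          Set.ncard_image_of_injective _ Sum.inr_injective]

lemma tcwLE_ncard (hfin : G.verts.Finite) : tcwLE G G.verts.ncard := by
  refine ⟨Unit, inferInstance, SimpleGraph.starGraph (), fun _ => G.verts,
    ⟨SimpleGraph.isTree_starGraph (), fun a b h => (h (Subsingleton.elim a b)).elim,
      Set.iUnion_const _⟩, fun a b h => (h.ne (Subsingleton.elim a b)).elim, fun t H hH => ?_⟩
  simpa using ncard_verts_le_of_isThreeCenter (X := fun _ : Unit => G.verts) (t := t) hfin hH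

-- `tcw G` is an `sInf`, which is only attained once some width is known to be achievable.
lemma tcwLE_of_tcw_le (hfin : G.verts.Finite) {w : ℕ} (h : tcw G ≤ w) : tcwLE G w := by
  obtain ⟨ι, hι, T, X, hX, hadh, htorso⟩ : tcwLE G (tcw G) :=
    Nat.sInf_mem (s := {w | tcwLE G w}) ⟨_, tcwLE_ncard hfin⟩
  exact ⟨ι, hι, T, X, hX, fun a b hab => (hadh a b hab).trans h,
    fun t H hH => (htorso t H hH).trans h⟩

lemma edgeSide_eq_biUnion (T : SimpleGraph ι) (X : ι → Set V) (a b : ι) :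
    edgeSide T X a b = ⋃ t ∈ T.side a b, X t := rfl

lemma subset_edgeSide (ht : t ∈ T.side a b) : X t ⊆ edgeSide T X a b :=
  Set.subset_biUnion_of_mem (u := X) ht

namespace IsTCD

variable (hX : IsTCD G T X)
include hX

lemma subset_verts (t : ι) : X t ⊆ G.verts :=
  hX.2.2 ▸ Set.subset_iUnion X t

lemma edgeSide_subset_verts (a b : ι) : edgeSide T X a b ⊆ G.verts :=
  Set.iUnion₂_subset fun t _ => hX.subset_verts t

lemma exists_mem_bag (hv : v ∈ G.verts) : ∃ t, v ∈ X t := by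
  rw [← hX.2.2] at hv
  exact Set.mem_iUnion.mp hv

lemma eq_of_mem (hv : v ∈ X a) (hv' : v ∈ X b) : a = b := by
  by_contra hab
  exact Set.disjoint_left.mp (hX.2.1 hab) hv hv'

lemma mem_edgeSide_iff (hv : v ∈ X t) : v ∈ edgeSide T X a b ↔ t ∈ T.side a b := by
  refine ⟨fun h => ?_, fun h => subset_edgeSide h hv⟩
  obtain ⟨t', ht', hv'⟩ := Set.mem_iUnion₂.mp h
  rwa [hX.eq_of_mem hv hv']

lemma edgeSide_union (a b : ι) : edgeSide T X a b ∪ edgeSide T X b a = G.verts := by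
  rw [edgeSide_eq_biUnion, edgeSide_eq_biUnion, ← Set.biUnion_union,
    hX.1.1.preconnected.side_union, Set.biUnion_univ, hX.2.2]

lemma disjoint_edgeSide (hab : T.Adj a b) :
    Disjoint (edgeSide T X a b) (edgeSide T X b a) := by
  refine Set.disjoint_left.mpr fun v ha hb => ?_
  obtain ⟨t, hv⟩ := hX.exists_mem_bag (hX.edgeSide_union a b ▸ Set.mem_union_left _ ha)
  exact Set.disjoint_left.mp (hX.1.2.disjoint_side hab) ((hX.mem_edgeSide_iff hv).mp ha)
    ((hX.mem_edgeSide_iff hv).mp hb)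

lemma edgeSide_eq_diff (hab : T.Adj a b) : edgeSide T X a b = G.verts \ edgeSide T X b a := by
  rw [← hX.edgeSide_union a b, Set.union_sdiff_right, (hX.disjoint_edgeSide hab).sdiff_eq_left]

lemma torsoMap_of_mem_edgeSide {s : ι} (hts : T.Adj t s) (hv : v ∈ edgeSide T X s t) :
    torsoMap T X t v = Sum.inr s := by
  obtain ⟨t', ht', hvt'⟩ := Set.mem_iUnion₂.mp hv
  have hvt : v ∉ X t := fun h => hX.1.2.notMem_side hts.symm (hX.eq_of_mem hvt' h ▸ ht')
  have hex : ∃ s', T.Adj t s' ∧ ∃ t'', v ∈ X t'' ∧ ReachAvoid T t s' t'' :=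
    ⟨s, hts, t', hvt', (hX.1.2.reachAvoid_iff_mem_side hts t').mpr ht'⟩
  obtain ⟨hts', t'', hvt'', hra⟩ := hex.choose_spec
  rw [torsoMap, if_neg hvt, compOf, dif_pos hex]
  exact congrArg Sum.inr (hX.1.2.eq_of_mem_side hts' hts
    ((hX.1.2.reachAvoid_iff_mem_side hts' t'').mp hra) (hX.eq_of_mem hvt' hvt'' ▸ ht'))

lemma torsoMap_ne_of_notMem_edgeSide {s : ι} (hts : T.Adj t s) (hv : v ∉ edgeSide T X s t) :
    torsoMap T X t v ≠ Sum.inr s := by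
  unfold torsoMap compOf
  split_ifs with _ hex
  · simp
  · obtain ⟨-, t', hvt', hra⟩ := hex.choose_spec
    intro he
    rw [Sum.inr_injective he] at hra
    exact hv (subset_edgeSide ((hX.1.2.reachAvoid_iff_mem_side hts t').mp hra) hvt')
  · exact fun he => hts.ne (Sum.inr_injective he)

lemma torso_verts_eq : (torso G T X t).verts =
    Sum.inl '' X t ∪ Sum.inr '' {s | T.Adj t s ∧ (edgeSide T X s t).Nonempty} := by
  refine congrArg (Sum.inl '' X t ∪ Sum.inr '' ·) (Set.ext fun s => and_congr_right fun hts => ?_)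
  simp only [hX.1.2.reachAvoid_iff_mem_side hts, edgeSide_eq_biUnion, Set.nonempty_biUnion]
  exact ⟨fun ⟨t', v, hv, ht'⟩ => ⟨t', ht', v, hv⟩, fun ⟨t', ht', v, hv⟩ => ⟨t', v, hv, ht'⟩⟩

lemma three_le_degree_torso (h3 : G.ThreeEdgeConnected) {s : ι}
    (hts : T.Adj t s) (hin : (edgeSide T X s t).Nonempty)
    (hout : (G.verts \ edgeSide T X s t).Nonempty) :
    3 ≤ (torso G T X t).degree (Sum.inr s) := by
  have hcut := h3.three_le_card_cut (U := edgeSide T X s t)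
    (hin.mono fun _ hv => ⟨hv, hX.edgeSide_subset_verts s t hv⟩) hout
  refine hcut.trans ((Multiset.card_map (Sym2.map (torsoMap T X t)) _).symm.trans_le
    (Multiset.card_le_card ?_))
  have hmem : ∀ e ∈ G.cut (edgeSide T X s t) (edgeSide T X s t)ᶜ,
      Sum.inr s ∈ e.map (torsoMap T X t) ∧ ¬ (e.map (torsoMap T X t)).IsDiag := by
    rintro _ hcut
    obtain ⟨a, ha, b, hb, rfl⟩ := (Multiset.mem_filter.mp hcut).2
    have hb' := hX.torsoMap_ne_of_notMem_edgeSide hts hb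
    simp [hX.torsoMap_of_mem_edgeSide hts ha, Ne.symm hb']
  have hle : (G.cut (edgeSide T X s t) (edgeSide T X s t)ᶜ).map (Sym2.map (torsoMap T X t)) ≤
      (torso G T X t).edges.filter (Sum.inr s ∈ ·) := by
    refine Multiset.le_filter.mpr ⟨Multiset.le_filter.mpr ⟨Multiset.map_le_map
      (Multiset.filter_le _ _), ?_⟩, ?_⟩ <;>
    · simp only [Multiset.mem_map]
      rintro _ ⟨e, he, rfl⟩
      simp [hmem e he]
  -- `degree` filters with the classical instance for `∈`, hence `convert` rather than `exact`
  convert hle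

/-- The torso at `t` is already its own 3-center: by 3-edge-connectivity every contracted
branch that misses a vertex of `G` has degree at least 3. -/
lemma ncard_bag_add_ncard_le [Finite ι] (h3 : G.ThreeEdgeConnected) (hXt : (X t).Finite) {w : ℕ}
    (htorso : ∀ H, IsThreeCenter (Sum.inl '' X t) (torso G T X t) H → H.verts.ncard ≤ w)
    (hout : ∀ s, T.Adj t s → (G.verts \ edgeSide T X s t).Nonempty) :
    (X t).ncard + {s | T.Adj t s ∧ (edgeSide T X s t).Nonempty}.ncard ≤ w := by
  have hself : IsThreeCenter (Sum.inl '' X t) (torso G T X t) (torso G T X t) := by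
    refine isThreeCenter_self fun x hx hxA => ?_
    rw [hX.torso_verts_eq] at hx
    rcases hx with hx | ⟨s, ⟨hts, hne⟩, rfl⟩
    · exact absurd hx hxA
    · exact hX.three_le_degree_torso h3 hts hne (hout s hts)
  have hcard := htorso _ hself
  rwa [hX.torso_verts_eq, Set.ncard_union_eq (by simp [Set.disjoint_left]) (hXt.image _)
    (Set.toFinite _), Set.ncard_image_of_injective _ Sum.inl_injective,
    Set.ncard_image_of_injective _ Sum.inr_injective] at hcard

end IsTCD

lemma gammaExt_eq_zero (hv : v ∉ S) : G.gammaExt S v = 0 := if_neg hv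

lemma finsum_gammaExt_le_card_cut (hfin : G.verts.Finite) :
    ∑ᶠ v ∈ G.verts, G.gammaExt S v ≤ Multiset.card (G.cut S (G.verts \ S)) := by
  let q : V → Sym2 V → Prop := fun v e => ∃ u, u ∈ G.verts ∧ u ∉ S ∧ e = s(v, u)
  have hbw : ∀ v ∈ S, G.bWeight S v = (G.cut S (G.verts \ S)).countP (q v) := by
    intro v hv
    rw [Multiset.countP_eq_card_filter, cut, Multiset.filter_filter, bWeight]
    congr 1
    refine Multiset.filter_congr fun e _ => ⟨fun h => ⟨h, ?_⟩, And.left⟩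
    obtain ⟨u, hu, huS, rfl⟩ := h
    exact ⟨v, hv, u, ⟨hu, huS⟩, rfl⟩
  rw [finsum_mem_eq_finite_toFinset_sum _ hfin]
  simp only [gammaExt]
  rw [← Finset.sum_filter, Finset.sum_congr rfl fun v hv => hbw v (Finset.mem_filter.mp hv).2]
  refine Multiset.sum_countP_le_card _ _ _ ?_
  rintro e - a ha b hb ⟨u, -, hu, rfl⟩ ⟨u', -, hu', he⟩
  rw [Finset.mem_filter] at ha hb
  rcases Sym2.eq_iff.mp he with ⟨rfl, -⟩ | ⟨rfl, rfl⟩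
  · rfl
  · exact absurd ha.2 hu'

namespace IsTCD

variable [Finite ι] (hX : IsTCD G T X) (hfin : G.verts.Finite) {w : ℕ}
include hX hfin

lemma sideWeight_eq (a b : ι) :
    G.sideWeight T X S a b = ∑ᶠ v ∈ edgeSide T X b a, G.gammaExt S v := by
  have hside : {t | (T.deleteEdges {s(a, b)}).Reachable b t} = T.side b a := by
    rw [SimpleGraph.side, Sym2.eq_swap]
  rw [sideWeight, hside, edgeSide_eq_biUnion, finsum_mem_biUnion (fun _ _ _ _ h => hX.2.1 h)
    (Set.toFinite _) fun t _ => hfin.subset (hX.subset_verts t)]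

lemma sideWeight_add_sideWeight (hab : T.Adj a b) :
    G.sideWeight T X S a b + G.sideWeight T X S b a = ∑ᶠ v ∈ G.verts, G.gammaExt S v := by
  rw [hX.sideWeight_eq hfin, hX.sideWeight_eq hfin,
    ← finsum_mem_union (hX.disjoint_edgeSide hab.symm) (hfin.subset (hX.edgeSide_subset_verts b a))
      (hfin.subset (hX.edgeSide_subset_verts a b)),
    hX.edgeSide_union]

lemma sideWeight_eq_zero (h : S ∩ edgeSide T X b a = ∅) : G.sideWeight T X S a b = 0 := by
  rw [hX.sideWeight_eq hfin]
  exact finsum_mem_of_eqOn_zero fun v hv =>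
    gammaExt_eq_zero fun hvS => Set.eq_empty_iff_forall_notMem.mp h v ⟨hvS, hv⟩

lemma ruleOrient_asymm (hS : S ⊆ G.verts) (hSne : S.Nonempty)
    (htot : ∑ᶠ v ∈ G.verts, G.gammaExt S v ≤ 2 * w) (hab : T.Adj a b) :
    ruleOrient G T X S w a b → ¬ ruleOrient G T X S w b a := by
  have hsum := hX.sideWeight_add_sideWeight hfin (S := S) hab
  rintro (h | h) (h' | h')
  · omega
  · have := hX.sideWeight_eq_zero hfin h'
    omega
  · have := hX.sideWeight_eq_zero hfin h
    omega
  · obtain ⟨v, hv⟩ := hSne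
    have hv' : v ∈ edgeSide T X a b ∪ edgeSide T X b a := hX.edgeSide_union a b ▸ hS hv
    rcases hv' with hv' | hv'
    · exact Set.eq_empty_iff_forall_notMem.mp h v ⟨hv, hv'⟩
    · exact Set.eq_empty_iff_forall_notMem.mp h' v ⟨hv, hv'⟩

lemma exists_balanced_node (hS : S ⊆ G.verts) (hSne : S.Nonempty)
    (hcut : Multiset.card (G.cut S (G.verts \ S)) ≤ 2 * w) :
    ∃ t, ∀ s, T.Adj t s → G.sideWeight T X S t s ≤ w ∧ (S ∩ edgeSide T X t s).Nonempty := by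
  have : Nonempty ι := hX.1.1.nonempty
  obtain ⟨t, ht⟩ := hX.1.2.exists_forall_adj_not fun a b hab =>
    hX.ruleOrient_asymm hfin hS hSne ((finsum_gammaExt_le_card_cut hfin).trans hcut) hab
  refine ⟨t, fun s hts => ?_⟩
  simpa only [ruleOrient, not_or, not_lt, Set.nonempty_iff_ne_empty] using ht s hts

end IsTCD

def branches (T : SimpleGraph ι) (X : ι → Set V) (S : Set V) (t : ι) : Set ι :=
  {s | T.Adj t s ∧ (S ∩ edgeSide T X s t).Nonempty}

def starBags (T : SimpleGraph ι) (X : ι → Set V) (S : Set V) (t : ι) {ℓ : ℕ}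
    (e : Fin ℓ ≃ branches T X S t) : Option (Fin ℓ) → Set V
  | none => S ∩ X t
  | some i => S ∩ edgeSide T X (e i) t

namespace IsTCD

variable (hX : IsTCD G T X) {ℓ : ℕ} (e : Fin ℓ ≃ branches T X S t)
include hX

lemma isTCD_starBags : IsTCD (G.induce S) (starGraph ℓ) (starBags T X S t e) := by
  refine ⟨SimpleGraph.isTree_starGraph none, ?_, ?_⟩
  · have hcenter : ∀ i, Disjoint (starBags T X S t e none) (starBags T X S t e (some i)) :=
      fun i => Set.disjoint_left.mpr fun v ⟨_, hv⟩ ⟨_, hv'⟩ =>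
        hX.1.2.notMem_side (e i).2.1.symm ((hX.mem_edgeSide_iff hv).mp hv')
    rintro (_ | i) (_ | j) hne
    · exact absurd rfl hne
    · exact hcenter j
    · exact (hcenter i).symm
    · refine Set.disjoint_left.mpr fun v ⟨_, hv⟩ ⟨_, hv'⟩ => hne ?_
      obtain ⟨t', ht'⟩ := hX.exists_mem_bag (hX.edgeSide_subset_verts _ _ hv)
      exact congrArg some (e.injective (Subtype.ext (hX.1.2.eq_of_mem_side (e i).2.1 (e j).2.1
        ((hX.mem_edgeSide_iff ht').mp hv) ((hX.mem_edgeSide_iff ht').mp hv'))))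
  · refine Set.Subset.antisymm (Set.iUnion_subset fun o v hv => ?_) fun v ⟨hvG, hvS⟩ => ?_
    · cases o with
      | none => exact ⟨hX.subset_verts t hv.2, hv.1⟩
      | some i => exact ⟨hX.edgeSide_subset_verts _ _ hv.2, hv.1⟩
    · obtain ⟨t', hvt'⟩ := hX.exists_mem_bag hvG
      by_cases htt' : t' = t
      · exact Set.mem_iUnion.mpr ⟨none, hvS, htt' ▸ hvt'⟩
      · obtain ⟨s, hts, ht's⟩ := hX.1.1.preconnected.exists_adj_mem_side htt'
        have hv : v ∈ edgeSide T X s t := subset_edgeSide ht's hvt'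
        refine Set.mem_iUnion.mpr ⟨some (e.symm ⟨s, hts, v, hvS, hv⟩), hvS, ?_⟩
        simpa [starBags] using hv

lemma pos_of_ncard_starBags_none_lt (hfin : G.verts.Finite) (hS : S ⊆ G.verts)
    (h : (starBags T X S t e none).ncard < S.ncard) : 0 < ℓ := by
  by_contra! h0
  refine h.not_ge (Set.ncard_le_ncard (fun v hv => ?_)
    ((hfin.subset (hX.subset_verts t)).inter_of_right S))
  obtain ⟨_ | i, hvi⟩ := (hX.isTCD_starBags e).exists_mem_bag ⟨hS hv, hv⟩
  · exact hvi
  · exact absurd i.pos (by omega)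

lemma nonTrivial_starBags {i : Fin ℓ} (hi : (S ∩ edgeSide T X t (e i)).Nonempty) :
    NonTrivial (starBags T X S t e) := by
  obtain ⟨v, hvS, hv⟩ := hi
  obtain ⟨o, hvo⟩ :=
    (hX.isTCD_starBags e).exists_mem_bag ⟨hX.edgeSide_subset_verts _ _ hv, hvS⟩
  refine ⟨some i, o, fun h => ?_, (e i).2.2, v, hvo⟩
  subst h
  exact Set.disjoint_left.mp (hX.disjoint_edgeSide (e i).2.1) hv hvo.2

lemma card_adhesion_starBags_le {w : ℕ}
    (hadh : ∀ a b, T.Adj a b → Multiset.card (adhesion G T X a b) ≤ w) {o o' : Option (Fin ℓ)}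
    (ho : (starGraph ℓ).Adj o o') :
    Multiset.card (adhesion (G.induce S) (starGraph ℓ) (starBags T X S t e) o o') ≤ w := by
  have hY := hX.isTCD_starBags e
  have hleaf : ∀ i, edgeSide (starGraph ℓ) (starBags T X S t e) (some i) none ⊆
      edgeSide T X (e i) t := by
    intro i
    rw [edgeSide_eq_biUnion, side_starGraph_some, Set.biUnion_singleton]
    exact Set.inter_subset_right
  have hcenter : ∀ i, edgeSide (starGraph ℓ) (starBags T X S t e) none (some i) ⊆
      edgeSide T X t (e i) := by
    intro i
    rw [hY.edgeSide_eq_diff (by simp [starGraph_eq]), hX.edgeSide_eq_diff (e i).2.1]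
    rintro v ⟨⟨hvG, hvS⟩, hv⟩
    refine ⟨hvG, fun hv' => hv ?_⟩
    rw [edgeSide_eq_biUnion, side_starGraph_some, Set.biUnion_singleton]
    exact ⟨hvS, hv'⟩
  have hE : (G.induce S).edges ≤ G.edges := Multiset.filter_le _ _
  rcases o with _ | i <;> rcases o' with _ | j
  · exact absurd ho (SimpleGraph.irrefl _)
  · exact (Multiset.card_le_card (cut_mono hE (hcenter j) (hleaf j))).trans
      (hadh _ _ (e j).2.1)
  · exact (Multiset.card_le_card (cut_mono hE (hleaf i) (hcenter i))).trans
      (hadh _ _ (e i).2.1.symm)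
  · simp [starGraph_eq] at ho

lemma ncard_starBags_none_add_le [Finite ι] (h3 : G.ThreeEdgeConnected) (hfin : G.verts.Finite)
    {w : ℕ} (htorso : ∀ H, IsThreeCenter (Sum.inl '' X t) (torso G T X t) H → H.verts.ncard ≤ w)
    (hbal : ∀ s, T.Adj t s → (S ∩ edgeSide T X t s).Nonempty) :
    (starBags T X S t e none).ncard + ℓ ≤ w := by
  have hout : ∀ s, T.Adj t s → (G.verts \ edgeSide T X s t).Nonempty := fun s hts =>
    let ⟨v, _, hv⟩ := hbal s hts
    ⟨v, hX.edgeSide_subset_verts _ _ hv, Set.disjoint_left.mp (hX.disjoint_edgeSide hts) hv⟩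
  have hXt : (X t).Finite := hfin.subset (hX.subset_verts t)
  have hbound := hX.ncard_bag_add_ncard_le h3 hXt htorso hout
  have hcenter : (S ∩ X t).ncard ≤ (X t).ncard := Set.ncard_le_ncard Set.inter_subset_right hXt
  have hleaves : ℓ ≤ {s | T.Adj t s ∧ (edgeSide T X s t).Nonempty}.ncard := by
    rw [← Nat.card_fin ℓ, ← Set.ncard_range_of_injective (Subtype.val_injective.comp e.injective)]
    refine Set.ncard_le_ncard ?_ (Set.toFinite _)
    rintro _ ⟨i, rfl⟩
    exact ⟨(e i).2.1, (e i).2.2.mono Set.inter_subset_right⟩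
  exact (add_le_add hcenter hleaves).trans hbound

lemma finsum_bWeight_le_sideWeight [Finite ι] (hfin : G.verts.Finite) {s : ι} {A : Set V}
    (hA : A ⊆ edgeSide T X s t) :
    ∑ᶠ x ∈ G.boundary S ∩ A, G.bWeight S x ≤ G.sideWeight T X S t s := by
  rw [hX.sideWeight_eq hfin]
  calc ∑ᶠ x ∈ G.boundary S ∩ A, G.bWeight S x = ∑ᶠ x ∈ G.boundary S ∩ A, G.gammaExt S x :=
        finsum_mem_congr rfl fun x hx => (if_pos hx.1.1).symm
    _ ≤ ∑ᶠ x ∈ edgeSide T X s t, G.gammaExt S x :=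
        finsum_mem_le_finsum_mem_of_subset (fun x hx => hA hx.2)
          (hfin.subset (hX.edgeSide_subset_verts s t))

end IsTCD

end MGraph

lemma ncard_threeCenter_starGraph_le {V : Type} {G : MGraph V} {ℓ w : ℕ}
    {Y : Option (Fin ℓ) → Set V} (hY : (Y none).Finite) (hw : (Y none).ncard + ℓ ≤ w)
    {o : Option (Fin ℓ)} (ho : ¬ IsLeaf (starGraph ℓ) o) {H : MGraph (V ⊕ Option (Fin ℓ))}
    (hH : IsThreeCenter (Sum.inl '' Y o) (torso G (starGraph ℓ) Y o) H) : H.verts.ncard ≤ w := by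
  cases o with
  | none =>
    have := MGraph.ncard_verts_le_of_isThreeCenter hY hH
    rw [ncard_neighborSet_starGraph_none] at this
    omega
  | some i => exact absurd (isLeaf_starGraph_some i) ho

theorem exists_constrained_star_decomposition_general {V : Type} (G : MGraph V)
    (hfin : G.verts.Finite) (h3 : G.ThreeEdgeConnected) (w : ℕ)
    (S : Set V) (hSsub : S ⊆ G.verts) (hScard : w + 1 ≤ S.ncard)
    (hcut : Multiset.card (G.cut S (G.verts \ S)) ≤ 2 * w)
    (htcw : tcw G ≤ w) :
    ∃ (ℓ : ℕ) (X : Option (Fin ℓ) → Set V), 1 ≤ ℓ ∧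
      IsTCD (G.induce S) (starGraph ℓ) X ∧
      NonTrivial X ∧
      InWidthLE (G.induce S) (starGraph ℓ) X w ∧
      (X none).ncard + ℓ ≤ w ∧
      ∀ i : Fin ℓ, (∑ᶠ x ∈ G.boundary S ∩ X (some i), G.bWeight S x) ≤ w := by
  obtain ⟨ι, _, T, X, hX, hadh, htorso⟩ := tcwLE_of_tcw_le hfin htcw
  obtain ⟨t, hbal⟩ := hX.exists_balanced_node hfin hSsub
    (Set.nonempty_of_ncard_ne_zero (by omega)) hcut
  let e := (Finite.equivFin (branches T X S t)).symm
  have hcenter := hX.ncard_starBags_none_add_le e h3 hfin (htorso t) fun s hs => (hbal s hs).2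
  have hℓ := hX.pos_of_ncard_starBags_none_lt e hfin hSsub (by omega)
  refine ⟨_, starBags T X S t e, hℓ, hX.isTCD_starBags e,
    hX.nonTrivial_starBags e (i := ⟨0, hℓ⟩) (hbal _ (e _).2.1).2,
    ⟨fun _ _ => hX.card_adhesion_starBags_le e hadh, fun _ ho _ =>
      ncard_threeCenter_starGraph_le ((hfin.subset hSsub).inter_of_left _) hcenter ho⟩,
    hcenter, fun i => ?_⟩
  exact (hX.finsum_bWeight_le_sideWeight hfin Set.inter_subset_right).trans
    (hbal _ (e i).2.1).1

theorem exists_constrained_star_decomposition {V : Type} (G : MGraph V)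
    (hfin : G.verts.Finite) (h3 : G.ThreeEdgeConnected) (w : ℕ) (hw : 2 ≤ w)
    (S : Set V) (hSsub : S ⊆ G.verts) (hScard : w + 1 ≤ S.ncard)
    (hcut : Multiset.card (G.cut S (G.verts \ S)) ≤ 2 * w)
    (htcw : tcw G ≤ w) :
    ∃ (ℓ : ℕ) (X : Option (Fin ℓ) → Set V), 1 ≤ ℓ ∧
      IsTCD (G.induce S) (starGraph ℓ) X ∧
      NonTrivial X ∧
      InWidthLE (G.induce S) (starGraph ℓ) X w ∧
      (X none).ncard + ℓ ≤ w ∧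
      ∀ i : Fin ℓ, (∑ᶠ x ∈ G.boundary S ∩ X (some i), G.bWeight S x) ≤ w :=
  exists_constrained_star_decomposition_general G hfin h3 w S hSsub hScard hcut htcw
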